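/- Let V_R be a set of functions from X to [-R, R] with finite pseudo-dimension Pdim(V_R), and ν a probability measure on X. Then for any ε ∈ (0, R], the 2ε-packing number in L¹(ν) satisfies M(2ε, V_R, ‖·‖_{L¹(ν)}) ≤ 2((2eR/ε)·ln(2eR/ε))^{Pdim(V_R)}. -/

import Mathlib

open MeasureTheory Real

variable {X : Type*}

/-- `V` pseudo-shatters `ℓ` points. -/
def PShatters (V : Set (X → ℝ)) (ℓ : ℕ) : Prop :=
  ∃ ξ : Fin ℓ → X, ∃ η : Fin ℓ → ℝ, ∀ a : Fin ℓ → Bool,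
    ∃ v ∈ V, ∀ i, (v (ξ i) > η i ↔ a i = true)

/-- The pseudo-dimension of a class of real-valued functions on `X`. -/
noncomputable def pdim (V : Set (X → ℝ)) : ℕ∞ :=
  sSup {n : ℕ∞ | ∃ ℓ : ℕ, (ℓ : ℕ∞) = n ∧ PShatters V ℓ}

/-!
Haussler's argument. Let `C = 2eR/ε`, `B = C log C`, and suppose the packing has more than
`2 B^p` elements; keep a subfamily `Q` of `n = ⌊2 B^p⌋ + 1` of them. Draw `m ≈ (R/ε) log n`
points from `ν` and, independently, `m` thresholds uniformly from `[-R, R]`. Two functions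
`f ≠ g` get the same sign at a given coordinate with probability `1 - ∫|f - g| dν / 2R ≤ 1 - ε/R`,
so the expected number of ordered pairs of `Q` with equal sign patterns is at most
`n(n-1)(1 - ε/R)^m ≤ n - 1`. For a sample achieving this, `Q` realises at least `(n + 1)/2`
distinct patterns, whereas by the Sauer–Shelah lemma it realises at most
`∑_{i ≤ p} (m choose i) ≤ B^p`, a contradiction.
-/

open Finset ProbabilityTheory

theorem exists_sum_prod_le_sum_prod_integral {ι κ Ω : Type*} [Fintype κ] [MeasurableSpace Ω]
    (μ : Measure Ω) [IsProbabilityMeasure μ] (s : Finset ι) (h : ι → κ → Ω → ℝ)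
    (hh : ∀ a ∈ s, ∀ k, Integrable (h a k) μ) :
    ∃ ω : κ → Ω, ∑ a ∈ s, ∏ k, h a k (ω k) ≤ ∑ a ∈ s, ∏ k, ∫ y, h a k y ∂μ := by
  have hint : ∀ a ∈ s, Integrable (fun ω : κ → Ω ↦ ∏ k, h a k (ω k)) (Measure.pi fun _ ↦ μ) :=
    fun a ha ↦ Integrable.fintype_prod (hh a ha)
  obtain ⟨ω, hω⟩ := exists_le_integral (integrable_finsetSum s hint)
  refine ⟨ω, hω.trans_eq ?_⟩
  rw [integral_finsetSum s hint]
  simp_rw [integral_fintype_prod_eq_prod]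

theorem cond_Icc_measureReal_Ico {R a b : ℝ} (ha : -R ≤ a) (hab : a ≤ b) (hb : b ≤ R) :
    (volume[|Set.Icc (-R) R]).real (Set.Ico a b) = (b - a) / (2 * R) := by
  rw [measureReal_def, cond_apply measurableSet_Icc,
    Set.inter_eq_right.2 (Set.Ico_subset_Icc_self.trans (Set.Icc_subset_Icc ha hb)),
    Real.volume_Icc, Real.volume_Ico, ENNReal.toReal_mul, ENNReal.toReal_inv,
    ENNReal.toReal_ofReal (by linarith), ENNReal.toReal_ofReal (by linarith)]
  ring

theorem one_sub_pow_le_inv {δ n : ℝ} (hδ : δ ≤ 1) (hn : 0 < n) {m : ℕ} (hm : log n ≤ δ * m) :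
    (1 - δ) ^ m ≤ n⁻¹ :=
  calc (1 - δ) ^ m ≤ exp (-δ) ^ m :=
        pow_le_pow_left₀ (by linarith) (by linarith [add_one_le_exp (-δ)]) m
    _ = exp (-(δ * m)) := by rw [← exp_nat_mul]; ring_nf
    _ ≤ exp (-log n) := exp_le_exp.2 (by linarith)
    _ = n⁻¹ := by rw [exp_neg, exp_log hn]

theorem two_mul_card_le_card_filter_offDiag_add {α β : Type*} [DecidableEq β]
    (s : Finset α) (f : α → β) :
    2 * #s ≤ #{q ∈ s.offDiag | f q.1 = f q.2} + 2 * #(s.image f) := by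
  have hpairs : #{q ∈ s.offDiag | f q.1 = f q.2} =
      ∑ y ∈ s.image f, #{a ∈ s | f a = y}.offDiag := by
    rw [card_eq_sum_card_fiberwise (f := fun q ↦ f q.1) fun q hq ↦
      mem_image_of_mem f (mem_offDiag.1 (mem_filter.1 hq).1).1]
    refine sum_congr rfl fun y _ ↦ congrArg card ?_
    ext q
    simp only [mem_filter, mem_offDiag]
    grind
  rw [hpairs, card_eq_sum_card_image f s, mul_sum, mul_comm, ← smul_eq_mul, ← sum_const,
    ← sum_add_distrib]
  refine sum_le_sum fun y _ ↦ ?_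
  -- a fibre of size `k` contributes `k (k - 1) ≥ 2 (k - 1)` ordered pairs
  rw [offDiag_card]
  have hsq := Nat.le_mul_self #{a ∈ s | f a = y}
  zify [hsq]
  nlinarith [sq_nonneg ((#{a ∈ s | f a = y} : ℤ) - 1),
    sq_nonneg ((#{a ∈ s | f a = y} : ℤ) - 2)]

theorem sum_choose_le_exp_mul_div_pow {p m : ℕ} (hp : 1 ≤ p) (hpm : p ≤ m) :
    ∑ i ∈ Iic p, (m.choose i : ℝ) ≤ (exp 1 * m / p) ^ p := by
  have hp₀ : (0 : ℝ) < p := by exact_mod_cast hp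
  have hm₀ : (0 : ℝ) < m := by exact_mod_cast hp.trans hpm
  set x : ℝ := p / m with hx
  have hx₀ : 0 < x := by positivity
  have hx₁ : x ≤ 1 := div_le_one_of_le₀ (by exact_mod_cast hpm) hm₀.le
  have hsum : (∑ i ∈ Iic p, (m.choose i : ℝ)) * x ^ p ≤ exp p :=
    calc (∑ i ∈ Iic p, (m.choose i : ℝ)) * x ^ p
        ≤ ∑ i ∈ Iic p, (m.choose i : ℝ) * x ^ i := by
          rw [sum_mul]
          exact sum_le_sum fun i hi ↦ mul_le_mul_of_nonneg_left
            (pow_le_pow_of_le_one hx₀.le hx₁ (mem_Iic.1 hi)) (Nat.cast_nonneg _)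
      _ ≤ ∑ i ∈ range (m + 1), (m.choose i : ℝ) * x ^ i :=
          sum_le_sum_of_subset_of_nonneg
            (fun i hi ↦ mem_range.2 (Nat.lt_succ_of_le ((mem_Iic.1 hi).trans hpm)))
            fun i _ _ ↦ by positivity
      _ = (1 + x) ^ m := by
          rw [add_comm 1 x, add_pow]
          exact sum_congr rfl fun i _ ↦ by ring
      _ ≤ exp x ^ m := pow_le_pow_left₀ (by positivity) (by linarith [add_one_le_exp x]) m
      _ = exp p := by rw [← exp_nat_mul, hx]; field_simp
  calc ∑ i ∈ Iic p, (m.choose i : ℝ) ≤ exp p / x ^ p := (le_div_iff₀ (by positivity)).2 hsum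
    _ = (exp 1 * m / p) ^ p := by
      rw [← exp_one_rpow, rpow_natCast, hx, div_pow, div_pow, mul_pow]
      field_simp

section SignPattern

variable {κ : Type*} [Fintype κ]

noncomputable def signPattern (x : κ → X) (t : κ → ℝ) (v : X → ℝ) : Finset κ :=
  {k | t k < v (x k)}

theorem signPattern_eq_signPattern_iff {x : κ → X} {t : κ → ℝ} {f g : X → ℝ} :
    signPattern x t f = signPattern x t g ↔
      ∀ k, t k ∉ Set.Ico (min (f (x k)) (g (x k))) (max (f (x k)) (g (x k))) := by
  simp only [signPattern, Finset.ext_iff, mem_filter, mem_univ, true_and, Set.mem_Ico,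
    min_le_iff, lt_max_iff]
  refine forall_congr' fun k ↦ ?_
  grind

theorem le_pdim_of_pshatters {V : Set (X → ℝ)} {ℓ : ℕ} (h : PShatters V ℓ) :
    (ℓ : ℕ∞) ≤ pdim V :=
  le_sSup ⟨ℓ, rfl, h⟩

theorem pshatters_of_shatters_image_signPattern [DecidableEq κ] {V : Set (X → ℝ)}
    {Q : Finset (X → ℝ)} (hQ : (Q : Set (X → ℝ)) ⊆ V) {x : κ → X} {t : κ → ℝ} {u : Finset κ}
    (hu : (Q.image (signPattern x t)).Shatters u) : PShatters V #u := by
  let e : Fin #u → κ := fun j ↦ u.equivFin.symm j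
  have he : Function.Injective e := Subtype.val_injective.comp u.equivFin.symm.injective
  refine ⟨x ∘ e, t ∘ e, fun a ↦ ?_⟩
  obtain ⟨w, hw, hwu⟩ := hu (filter_subset (fun k ↦ ∃ j, e j = k ∧ a j = true) u)
  obtain ⟨v, hvQ, rfl⟩ := mem_image.1 hw
  refine ⟨v, hQ hvQ, fun j ↦ ?_⟩
  have hj : e j ∈ u := (u.equivFin.symm j).2
  have := congrArg (e j ∈ ·) hwu
  simp only [mem_inter, mem_filter, hj, true_and, he.eq_iff, exists_eq_left,
    signPattern, mem_univ] at this
  simpa using this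

theorem card_image_signPattern_le [DecidableEq κ] {V : Set (X → ℝ)} {p : ℕ}
    (hp : pdim V ≤ p) {Q : Finset (X → ℝ)} (hQ : (Q : Set (X → ℝ)) ⊆ V) (x : κ → X)
    (t : κ → ℝ) :
    #(Q.image (signPattern x t)) ≤ ∑ i ∈ Iic p, (Fintype.card κ).choose i := by
  have hvc : (Q.image (signPattern x t)).vcDim ≤ p :=
    Finset.sup_le fun u hu ↦ by
      exact_mod_cast (le_pdim_of_pshatters
        (pshatters_of_shatters_image_signPattern hQ (mem_shatterer.1 hu))).trans hp
  calc #(Q.image (signPattern x t)) ≤ #(Q.image (signPattern x t)).shatterer :=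
        card_le_card_shatterer _
    _ ≤ _ := card_shatterer_le_sum_vcDim
    _ ≤ _ := sum_le_sum_of_subset (Iic_subset_Iic.2 hvc)

/-- Averaging over thresholds drawn uniformly from `[-R, R]`. -/
theorem exists_card_filter_signPattern_eq_le [DecidableEq κ] {R : ℝ} (hR : 0 < R)
    {Q : Finset (X → ℝ)} (hQ : ∀ f ∈ Q, ∀ y, f y ∈ Set.Icc (-R) R) (x : κ → X) :
    ∃ t : κ → ℝ, (#{q ∈ Q.offDiag | signPattern x t q.1 = signPattern x t q.2} : ℝ) ≤
      ∑ q ∈ Q.offDiag, ∏ k, (1 - |q.1 (x k) - q.2 (x k)| / (2 * R)) := by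
  have : IsProbabilityMeasure (volume[|Set.Icc (-R) R]) :=
    cond_isProbabilityMeasure_of_finite (by simp [Real.volume_Icc]; linarith) (by simp)
  let A : (X → ℝ) × (X → ℝ) → κ → Set ℝ := fun q k ↦
    Set.Ico (min (q.1 (x k)) (q.2 (x k))) (max (q.1 (x k)) (q.2 (x k)))
  obtain ⟨t, ht⟩ := exists_sum_prod_le_sum_prod_integral (volume[|Set.Icc (-R) R]) Q.offDiag
    (fun q k ↦ (A q k)ᶜ.indicator 1)
    (fun q _ k ↦ (integrable_const 1).indicator measurableSet_Ico.compl)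
  refine ⟨t, le_of_eq_of_le ?_
    (ht.trans_eq (sum_congr rfl fun q hq ↦ prod_congr rfl fun k _ ↦ ?_))⟩
  · simp only [Set.indicator_apply, Pi.one_apply, Fintype.prod_boole, sum_boole,
      signPattern_eq_signPattern_iff, Set.mem_compl_iff, A]
  · obtain ⟨hq₁, hq₂, -⟩ := mem_offDiag.1 hq
    obtain ⟨ha₁, ha₂⟩ := hQ _ hq₁ (x k)
    obtain ⟨hb₁, hb₂⟩ := hQ _ hq₂ (x k)
    rw [integral_indicator_one measurableSet_Ico.compl,
      probReal_compl_eq_one_sub measurableSet_Ico,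
      cond_Icc_measureReal_Ico (le_min ha₁ hb₁) min_le_max (max_le ha₂ hb₂),
      max_sub_min_eq_abs, abs_sub_comm]

/-- Averaging over sample points drawn from `ν`. Only `|f - g|`, not `f` and `g` themselves, is
integrable, which is why the points are fixed before the thresholds are drawn. -/
theorem exists_sum_prod_one_sub_le_pow [MeasurableSpace X] (ν : Measure X)
    [IsProbabilityMeasure ν] {R ε : ℝ} (hR : 0 < R) (hε : 0 < ε) {Q : Finset (X → ℝ)}
    (hQ : ∀ f ∈ Q, ∀ y, f y ∈ Set.Icc (-R) R)
    (hsep : ∀ f ∈ Q, ∀ g ∈ Q, f ≠ g → 2 * ε ≤ ∫ y, |f y - g y| ∂ν) :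
    ∃ x : κ → X, ∑ q ∈ Q.offDiag, ∏ k, (1 - |q.1 (x k) - q.2 (x k)| / (2 * R)) ≤
      #Q.offDiag * (1 - ε / R) ^ Fintype.card κ := by
  have hint : ∀ q ∈ Q.offDiag, Integrable (fun y ↦ |q.1 y - q.2 y|) ν := fun q hq ↦
    Integrable.of_integral_ne_zero (by
      obtain ⟨hq₁, hq₂, hne⟩ := mem_offDiag.1 hq
      linarith [hsep _ hq₁ _ hq₂ hne])
  have hbound : ∀ q ∈ Q.offDiag, 0 ≤ ∫ y, (1 - |q.1 y - q.2 y| / (2 * R)) ∂ν ∧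
      ∫ y, (1 - |q.1 y - q.2 y| / (2 * R)) ∂ν ≤ 1 - ε / R := by
    intro q hq
    obtain ⟨hq₁, hq₂, hne⟩ := mem_offDiag.1 hq
    have hgap := hsep _ hq₁ _ hq₂ hne
    have hle : ∀ y, |q.1 y - q.2 y| / (2 * R) ≤ 1 := fun y ↦ by
      obtain ⟨ha₁, ha₂⟩ := hQ _ hq₁ y
      obtain ⟨hb₁, hb₂⟩ := hQ _ hq₂ y
      rw [div_le_one (by positivity), abs_le]
      constructor <;> linarith
    refine ⟨integral_nonneg fun y ↦ sub_nonneg.2 (hle y), ?_⟩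
    rw [integral_sub (integrable_const 1) ((hint q hq).div_const _), integral_div,
      integral_const, probReal_univ, one_smul, sub_le_sub_iff_left,
      div_le_div_iff₀ hR (by positivity)]
    nlinarith
  obtain ⟨x, hx⟩ := exists_sum_prod_le_sum_prod_integral (κ := κ) ν Q.offDiag
    (fun q _ y ↦ 1 - |q.1 y - q.2 y| / (2 * R))
    fun q hq _ ↦ (integrable_const 1).sub ((hint q hq).div_const _)
  refine ⟨x, hx.trans ?_⟩
  rw [← nsmul_eq_mul]
  refine sum_le_card_nsmul _ _ _ fun q hq ↦ ?_
  rw [prod_const, card_univ]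
  exact pow_le_pow_left₀ (hbound q hq).1 (hbound q hq).2 _

end SignPattern

theorem card_add_one_le_two_mul_sum_choose [MeasurableSpace X] (ν : Measure X)
    [IsProbabilityMeasure ν] {R ε : ℝ} (hε : 0 < ε) (hεR : ε ≤ R) {V : Set (X → ℝ)}
    {p : ℕ} (hp : pdim V ≤ p) {Q : Finset (X → ℝ)} (hQV : (Q : Set (X → ℝ)) ⊆ V)
    (hQ : Q.Nonempty) (hQb : ∀ f ∈ Q, ∀ y, f y ∈ Set.Icc (-R) R)
    (hsep : ∀ f ∈ Q, ∀ g ∈ Q, f ≠ g → 2 * ε ≤ ∫ x, |f x - g x| ∂ν)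
    {m : ℕ} (hm : R * log #Q ≤ ε * m) :
    #Q + 1 ≤ 2 * ∑ i ∈ Iic p, m.choose i := by
  have hR : 0 < R := hε.trans_le hεR
  obtain ⟨x, hx⟩ := exists_sum_prod_one_sub_le_pow (κ := Fin m) ν hR hε hQb hsep
  obtain ⟨t, ht⟩ := exists_card_filter_signPattern_eq_le hR hQb x
  have hQ₀ : (0 : ℝ) < #Q := by exact_mod_cast hQ.card_pos
  have hcoll : (#{q ∈ Q.offDiag | signPattern x t q.1 = signPattern x t q.2} : ℝ) + 1 ≤ #Q :=
    calc _ ≤ ∑ q ∈ Q.offDiag, ∏ k, (1 - |q.1 (x k) - q.2 (x k)| / (2 * R)) + 1 := by gcongr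
      _ ≤ #Q.offDiag * (1 - ε / R) ^ m + 1 := by simpa using hx
      _ ≤ #Q.offDiag * (#Q : ℝ)⁻¹ + 1 := by
        gcongr
        exact one_sub_pow_le_inv (div_le_one_of_le₀ hεR hR.le) hQ₀
          (by rw [div_mul_eq_mul_div, le_div_iff₀ hR]; linarith)
      _ = #Q := by
        rw [offDiag_card, Nat.cast_sub (Nat.le_mul_self _), Nat.cast_mul]
        field_simp
        ring
  have hcoll' : #{q ∈ Q.offDiag | signPattern x t q.1 = signPattern x t q.2} + 1 ≤ #Q := by
    exact_mod_cast hcoll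
  have hpairs := two_mul_card_le_card_filter_offDiag_add Q (signPattern x t)
  have hpatterns := card_image_signPattern_le hp hQV x t
  rw [Fintype.card_fin] at hpatterns
  omega

theorem log_le_one_add_mul_log {B n : ℝ} (hB : 2 ≤ B) {p : ℕ} (hp : p ≠ 0) (hn₀ : 0 < n)
    (hn : n ≤ 2 * B ^ p + 1) : log n ≤ 1 + p * log B := by
  have he : 2.7 < exp 1 := lt_trans (by norm_num) exp_one_gt_d9
  have : n ≤ exp 1 * B ^ p := by nlinarith [le_self_pow₀ (by linarith : 1 ≤ B) hp]
  calc log n ≤ log (exp 1 * B ^ p) := log_le_log hn₀ this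
    _ = 1 + p * log B := by rw [log_mul (by positivity) (by positivity), log_exp, log_pow]

theorem natCast_le_log_of_two_mul_pow_lt {B n : ℝ} (hB : exp 1 ≤ B) {p : ℕ}
    (hn : 2 * B ^ p < n) : (p : ℝ) ≤ log n :=
  have hB₀ : 0 < B := (exp_pos 1).trans_le hB
  calc (p : ℝ) ≤ p * log B := le_mul_of_one_le_right p.cast_nonneg ((le_log_iff_exp_le hB₀).2 hB)
    _ = log (B ^ p) := (log_pow B p).symm
    _ ≤ log n := log_le_log (by positivity) (by linarith [pow_pos hB₀ p])

theorem sum_choose_le_mul_log_pow {C : ℝ} (hC : 2 * exp 1 ≤ C) {p : ℕ} {n : ℝ}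
    (hn : 2 * (C * log C) ^ p < n) (hn' : n ≤ 2 * (C * log C) ^ p + 1) {m : ℕ}
    (hm : C * log n / (2 * exp 1) ≤ m) (hm' : m ≤ C * log n / (2 * exp 1) + 1) :
    ∑ i ∈ Iic p, (m.choose i : ℝ) ≤ (C * log C) ^ p := by
  have he : 2.7 < exp 1 := lt_trans (by norm_num) exp_one_gt_d9
  have hC₀ : 0 < C := by linarith [exp_pos 1]
  set L := log C
  set B := C * L
  have hL : 1 ≤ L := (le_log_iff_exp_le hC₀).2 (by linarith)
  have hB : 2 * exp 1 ≤ B := by nlinarith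
  have hlogB : log B ≤ 2 * L - 1 := by
    rw [log_mul hC₀.ne' (by positivity)]
    linarith [log_le_sub_one_of_pos (by positivity : 0 < L)]
  rcases Nat.eq_zero_or_pos p with rfl | hp
  · simp [← Nat.range_succ_eq_Iic]
  have hBp : 0 < B ^ p := pow_pos (by linarith) p
  have hlogn : log n ≤ 1 + p * (2 * L - 1) :=
    (log_le_one_add_mul_log (by linarith) hp.ne' (by linarith) hn').trans (by gcongr)
  have hm'' : (m : ℝ) ≤ C * (1 + p * (2 * L - 1)) / (2 * exp 1) + 1 :=
    hm'.trans (by gcongr)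
  rcases Nat.lt_or_ge p 2 with hp2 | hp2
  · -- for `p = 1` the bound `(e m / p) ^ p` is too weak near `C = 2e`; use `∑ = 1 + m`
    obtain rfl : p = 1 := by omega
    have hBe : C * (1 + ((1 : ℕ) : ℝ) * (2 * L - 1)) / (2 * exp 1) = B / exp 1 := by
      field_simp
      ring
    have : B / exp 1 ≤ B - 2 := by
      rw [div_le_iff₀ (exp_pos 1)]
      nlinarith
    simp [← Nat.range_succ_eq_Iic, sum_range_succ]
    linarith
  have hpm : p ≤ m := by
    have hp_log := natCast_le_log_of_two_mul_pow_lt (by linarith) hn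
    have hlog_le : log n ≤ C * log n / (2 * exp 1) := by
      rw [le_div_iff₀ (by positivity)]
      nlinarith
    exact_mod_cast hp_log.trans (hlog_le.trans hm)
  have hp2' : (2 : ℝ) ≤ p := by exact_mod_cast hp2
  calc ∑ i ∈ Iic p, (m.choose i : ℝ) ≤ (exp 1 * m / p) ^ p :=
        sum_choose_le_exp_mul_div_pow hp hpm
    _ ≤ B ^ p := by
      gcongr
      rw [div_le_iff₀ (by positivity)]
      have h := mul_le_mul_of_nonneg_left hm'' (exp_pos 1).le
      have heq : exp 1 * (C * (1 + p * (2 * L - 1)) / (2 * exp 1) + 1) =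
          C / 2 + p * B - p * C / 2 + exp 1 := by
        field_simp
        ring
      nlinarith

theorem packing_le_pdim_bound_general [MeasurableSpace X]
    (ν : Measure X) [IsProbabilityMeasure ν]
    (R : ℝ) (V : Set (X → ℝ))
    (hVb : ∀ f ∈ V, ∀ x, f x ∈ Set.Icc (-R) R)
    (p : ℕ) (hp : pdim V = (p : ℕ∞))
    (ε : ℝ) (hε : ε ∈ Set.Ioc (0 : ℝ) R) :
    ∀ P : Finset (X → ℝ), (P : Set (X → ℝ)) ⊆ V →
      (∀ f ∈ P, ∀ g ∈ P, f ≠ g → 2 * ε ≤ ∫ x, |f x - g x| ∂ν) →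
      (P.card : ℝ) ≤ 2 * ((2 * exp 1 * R / ε) * Real.log (2 * exp 1 * R / ε)) ^ p := by
  intro P hPV hsep
  obtain ⟨hε₀, hεR⟩ := hε
  set C := 2 * exp 1 * R / ε with hC
  have hC₂ : 2 * exp 1 ≤ C := by
    rw [le_div_iff₀ hε₀]
    nlinarith [exp_pos 1]
  have hB : 0 < C * log C :=
    mul_pos (by linarith [exp_pos 1]) (log_pos (by linarith [add_one_le_exp 1]))
  by_contra! hP
  set n : ℕ := ⌊2 * (C * log C) ^ p⌋₊ + 1
  have hn : 2 * (C * log C) ^ p < n := by push_cast [n]; exact Nat.lt_floor_add_one _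
  have hn' : (n : ℝ) ≤ 2 * (C * log C) ^ p + 1 := by
    push_cast [n]
    linarith [Nat.floor_le (by positivity : 0 ≤ 2 * (C * log C) ^ p)]
  obtain ⟨Q, hQP, hQ⟩ := exists_subset_card_eq (s := P) (n := n)
    (Nat.succ_le_of_lt ((Nat.floor_lt (by positivity)).2 hP))
  have hCR : C * log n / (2 * exp 1) = R * log n / ε := by rw [hC]; field_simp
  set m := ⌈R * log n / ε⌉₊
  have key := card_add_one_le_two_mul_sum_choose ν hε₀ hεR hp.le
    ((coe_subset.2 hQP).trans hPV) (card_pos.1 (by omega)) (fun f hf ↦ hVb f (hPV (hQP hf)))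
    (fun f hf g hg ↦ hsep f (hQP hf) g (hQP hg)) (m := m)
    (by rw [hQ, mul_comm ε, ← div_le_iff₀ hε₀]; exact Nat.le_ceil _)
  have hsum := sum_choose_le_mul_log_pow hC₂ hn hn' (m := m) (hCR ▸ Nat.le_ceil _)
    (hCR ▸ (Nat.ceil_lt_add_one
      (div_nonneg (mul_nonneg (by linarith) (log_natCast_nonneg n)) hε₀.le)).le)
  rw [hQ] at key
  have : ((n + 1 : ℕ) : ℝ) ≤ 2 * ∑ i ∈ Iic p, (m.choose i : ℝ) := by exact_mod_cast key
  push_cast at this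
  linarith

theorem packing_le_pdim_bound [MeasurableSpace X]
    (ν : Measure X) [IsProbabilityMeasure ν]
    (R : ℝ) (hR : 0 < R) (V : Set (X → ℝ))
    (hVb : ∀ f ∈ V, ∀ x, f x ∈ Set.Icc (-R) R)
    (p : ℕ) (hp : pdim V = (p : ℕ∞))
    (ε : ℝ) (hε : ε ∈ Set.Ioc (0 : ℝ) R) :
    ∀ P : Finset (X → ℝ), (P : Set (X → ℝ)) ⊆ V →
      (∀ f ∈ P, ∀ g ∈ P, f ≠ g → 2 * ε ≤ ∫ x, |f x - g x| ∂ν) →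
      (P.card : ℝ) ≤ 2 * ((2 * exp 1 * R / ε) * Real.log (2 * exp 1 * R / ε)) ^ p :=
  packing_le_pdim_bound_general ν R V hVb p hp ε hε
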